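/- arXiv:2110.10589 — 6 statements merged into one kernel-verified Lean document; each statement's English description precedes it below -/
import Mathlib

section
/- Fix integers n ≥ 1, k ≥ 2 and 1 ≤ l ≤ k−1. Let S be any set of pairs (a,b) with 1 ≤ a < b ≤ k and let γ : {1,…,k} → ℤ be given by γ_m = #{(a,b) ∈ S : b = m} − #{(a,b) ∈ S : a = m}. Define β ∈ ℤ^k by β_m = γ_m + n for 1 ≤ m ≤ l and β_m = γ_m for l < m ≤ k (i.e. β = n·w_l + γ, where w_l is the l-th fundamental weight), and set ρ = (k−1, k−2, …, 1, 0). Let δ_1 ≥ δ_2 ≥ ⋯ ≥ δ_k be the weakly decreasing rearrangement of the k numbers β_1 + ρ_1, …, β_k + ρ_k. Then δ_l − δ_{l+1} ≥ n − k + 1; equivalently, the weight α = δ − ρ satisfies α_l − α_{l+1} ≥ n − k. -/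
/-!
For `m ≤ l` the entry `β m + ρ m = γ m + n + (k - m)` is at least `n`, since at most `k - m`
pairs of `S` start at `m`; for `m > l` it is at most `k - 1`, since at most `m - 1` pairs end
at `m`. The `l` large entries cannot all sit among the first `l - 1` places of the decreasing
rearrangement, and the `k - l` small ones cannot all sit after place `l + 1`; hence
`δ l ≥ n` and `δ (l + 1) ≤ k - 1`.
-/

theorem card_filter_snd_eq_le {S : Finset (ℕ × ℕ)} (hS : ∀ p ∈ S, 1 ≤ p.1 ∧ p.1 < p.2)
    (m : ℕ) : (S.filter (fun p => p.2 = m)).card ≤ m - 1 := by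
  calc (S.filter (fun p => p.2 = m)).card ≤ (Finset.Ico 1 m).card := by
        refine Finset.card_le_card_of_injOn Prod.fst (fun p hp => ?_) fun p hp q hq h => ?_
        · simp only [Finset.coe_filter, Set.mem_ofPred_eq] at hp
          have := hS p hp.1
          simp only [Finset.coe_Ico, Set.mem_Ico]
          omega
        · simp only [Finset.coe_filter, Set.mem_ofPred_eq] at hp hq
          exact Prod.ext h (hp.2.trans hq.2.symm)
    _ = m - 1 := Nat.card_Ico 1 m

theorem card_filter_fst_eq_le {S : Finset (ℕ × ℕ)} {k : ℕ} (hS : ∀ p ∈ S, p.1 < p.2 ∧ p.2 ≤ k)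
    (m : ℕ) : (S.filter (fun p => p.1 = m)).card ≤ k - m := by
  calc (S.filter (fun p => p.1 = m)).card ≤ (Finset.Ioc m k).card := by
        refine Finset.card_le_card_of_injOn Prod.snd (fun p hp => ?_) fun p hp q hq h => ?_
        · simp only [Finset.coe_filter, Set.mem_ofPred_eq] at hp
          have := hS p hp.1
          simp only [Finset.coe_Ioc, Set.mem_Ioc]
          omega
        · simp only [Finset.coe_filter, Set.mem_ofPred_eq] at hp hq
          exact Prod.ext (hp.2.trans hq.2.symm) h
    _ = k - m := Nat.card_Ioc m k

theorem Set.SurjOn.exists_mem_notMem_of_card_lt {α β : Type*} [DecidableEq β] {σ : α → β}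
    {s : Set α} {t : Finset β} (h : Set.SurjOn σ s t) (u : Finset α) (hu : u.card < t.card) :
    ∃ i ∈ s, i ∉ u ∧ σ i ∈ t := by
  by_contra! hcon
  have ht : t ⊆ u.image σ := fun b hb => by
    obtain ⟨i, hi, rfl⟩ := h hb
    by_contra hiu
    exact hcon i hi (fun hmem => hiu (Finset.mem_image_of_mem σ hmem)) hb
  exact hu.not_ge ((Finset.card_le_card ht).trans Finset.card_image_le)

theorem dominant_rearrangement_gap_bound_general
    (n k l : ℕ) (hl : 1 ≤ l) (hlk : l ≤ k - 1)
    (S : Finset (ℕ × ℕ))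
    (hS : ∀ p ∈ S, 1 ≤ p.1 ∧ p.1 < p.2 ∧ p.2 ≤ k)
    (γ : ℕ → ℤ)
    (hγ : ∀ m, γ m = ((S.filter (fun p => p.2 = m)).card : ℤ)
        - ((S.filter (fun p => p.1 = m)).card : ℤ))
    (β : ℕ → ℤ)
    (hβ : ∀ m, 1 ≤ m → m ≤ k → β m = if m ≤ l then γ m + (n : ℤ) else γ m)
    (ρ : ℕ → ℤ) (hρ : ∀ m, ρ m = (k : ℤ) - m)
    (σ : ℕ → ℕ) (hσ : Set.BijOn σ (Set.Icc 1 k) (Set.Icc 1 k))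
    (δ : ℕ → ℤ) (hδ : ∀ m, 1 ≤ m → m ≤ k → δ m = β (σ m) + ρ (σ m))
    (hmono : ∀ i j, 1 ≤ i → i ≤ j → j ≤ k → δ j ≤ δ i) :
    δ l - δ (l + 1) ≥ (n : ℤ) - k + 1 := by
  have hends m := card_filter_snd_eq_le (fun p hp => ⟨(hS p hp).1, (hS p hp).2.1⟩) m
  have hstarts m := card_filter_fst_eq_le (fun p hp => (hS p hp).2) m
  have hsurj (a b : ℕ) (ha : 1 ≤ a) (hb : b ≤ k) :
      Set.SurjOn σ (Set.Icc 1 k) ↑(Finset.Icc a b) := by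
    refine hσ.surjOn.mono subset_rfl ?_
    intro m hm
    simp only [Finset.coe_Icc, Set.mem_Icc] at hm ⊢
    omega
  obtain ⟨i, ⟨hi1, hik⟩, hil, hσi⟩ :=
    (hsurj 1 l le_rfl (by omega)).exists_mem_notMem_of_card_lt (Finset.Icc 1 (l - 1))
      (by rw [Nat.card_Icc, Nat.card_Icc]; omega)
  obtain ⟨j, ⟨hj1, hjk⟩, hjl, hσj⟩ :=
    (hsurj (l + 1) k (by omega) le_rfl).exists_mem_notMem_of_card_lt (Finset.Icc (l + 2) k)
      (by rw [Nat.card_Icc, Nat.card_Icc]; omega)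
  simp only [Finset.mem_Icc] at hil hσi hjl hσj
  have hlarge : (n : ℤ) ≤ δ l := by
    have := hstarts (σ i)
    calc (n : ℤ) ≤ β (σ i) + ρ (σ i) := by
          rw [hβ _ hσi.1 (by omega), if_pos hσi.2, hρ, hγ]
          omega
      _ = δ i := (hδ i hi1 hik).symm
      _ ≤ δ l := hmono l i hl (by omega) hik
  have hsmall : δ (l + 1) ≤ (k : ℤ) - 1 := by
    have := hends (σ j)
    calc δ (l + 1) ≤ δ j := hmono j (l + 1) hj1 (by omega) (by omega)
      _ = β (σ j) + ρ (σ j) := hδ j hj1 hjk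
      _ ≤ (k : ℤ) - 1 := by
          rw [hβ _ (by omega) hσj.2, if_neg (by omega), hρ, hγ]
          omega
  omega

/-- Fix integers `n ≥ 1`, `k ≥ 2` and `1 ≤ l ≤ k−1`.  Let `S` be a set of pairs
`(a,b)` with `1 ≤ a < b ≤ k` and let `γ m = #{(a,b) ∈ S : b = m} − #{(a,b) ∈ S : a = m}`.
Define `β = n·w_l + γ` (so `β m = γ m + n` for `m ≤ l` and `β m = γ m` otherwise),
and set `ρ = (k−1, k−2, …, 1, 0)`.  Let `δ_1 ≥ δ_2 ≥ ⋯ ≥ δ_k` be the weakly decreasing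
rearrangement of the `k` numbers `β_1 + ρ_1, …, β_k + ρ_k` (given by a bijection `σ`
of `{1,…,k}`).  Then `δ_l − δ_{l+1} ≥ n − k + 1`. -/
theorem dominant_rearrangement_gap_bound
    (n k l : ℕ) (hn : 1 ≤ n) (hk : 2 ≤ k) (hl : 1 ≤ l) (hlk : l ≤ k - 1)
    (S : Finset (ℕ × ℕ))
    (hS : ∀ p ∈ S, 1 ≤ p.1 ∧ p.1 < p.2 ∧ p.2 ≤ k)
    (γ : ℕ → ℤ)
    (hγ : ∀ m, γ m = ((S.filter (fun p => p.2 = m)).card : ℤ)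
        - ((S.filter (fun p => p.1 = m)).card : ℤ))
    (β : ℕ → ℤ)
    (hβ : ∀ m, 1 ≤ m → m ≤ k → β m = if m ≤ l then γ m + (n : ℤ) else γ m)
    (ρ : ℕ → ℤ) (hρ : ∀ m, ρ m = (k : ℤ) - m)
    (σ : ℕ → ℕ) (hσ : Set.BijOn σ (Set.Icc 1 k) (Set.Icc 1 k))
    (δ : ℕ → ℤ) (hδ : ∀ m, 1 ≤ m → m ≤ k → δ m = β (σ m) + ρ (σ m))
    (hmono : ∀ i j, 1 ≤ i → i ≤ j → j ≤ k → δ j ≤ δ i) :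
    δ l - δ (l + 1) ≥ (n : ℤ) - k + 1 :=
  dominant_rearrangement_gap_bound_general n k l hl hlk S hS γ hγ β hβ ρ hρ σ hσ δ hδ hmono
end

section
/- Let n and k be coprime integers with 1 < k < n. Let α, β : {1,…,k} → ℕ be weakly decreasing with α_k = β_k = 0 and with k·α_i ≤ (n−k)·(k−i) and k·β_i ≤ (n−k)·(k−i) for every 1 ≤ i ≤ k (that is, α, β ∈ 𝒰𝒫_{n,k}). Suppose γ : {1,…,k} → ℤ satisfies the Littlewood–Richardson bounds α_1 − α_{k−i+1} ≤ γ_i ≤ α_1 + β_i for all 1 ≤ i ≤ k. Then γ_i − γ_{i+1} < n − k for every 1 ≤ i ≤ k−1. -/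
/-! The Littlewood–Richardson bounds give `γ_i − γ_{i+1} ≤ β_i + α_{k−i}`. Upper triangularity
bounds `k·β_i` by `(n−k)(k−i)` and `k·α_{k−i}` by `(n−k)·i`, so `β_i + α_{k−i} ≤ n−k`; equality
would force `k ∣ (n−k)(k−i)`, impossible as `n − k` is coprime to `k` and `0 < k − i < k`. -/

theorem Nat.add_lt_of_mul_le_of_coprime {m k a b j l : ℕ} (hcop : Nat.Coprime m k)
    (hj : 0 < j) (hl : 0 < l) (hjl : j + l = k) (ha : k * a ≤ m * j) (hb : k * b ≤ m * l) :
    a + b < m := by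
  have hndvd : ¬ k ∣ m * j := fun hdvd =>
    absurd (Nat.le_of_dvd hj (hcop.symm.dvd_of_dvd_mul_left hdvd)) (by omega)
  have ha' : k * a < m * j := lt_of_le_of_ne ha fun h => hndvd ⟨a, h.symm⟩
  refine Nat.lt_of_mul_lt_mul_left (a := k) ?_
  calc k * (a + b) = k * a + k * b := Nat.mul_add k a b
    _ < m * j + m * l := Nat.add_lt_add_of_lt_of_le ha' hb
    _ = k * m := by rw [← Nat.mul_add, hjl, Nat.mul_comm]

theorem upper_triangular_weights_give_CM_bound_general
    (n k : ℕ) (hcop : Nat.Coprime n k) (hkn : k < n)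
    (α β : ℕ → ℕ)
    (hαUT : ∀ i, 1 ≤ i → i ≤ k → k * α i ≤ (n - k) * (k - i))
    (hβUT : ∀ i, 1 ≤ i → i ≤ k → k * β i ≤ (n - k) * (k - i))
    (γ : ℕ → ℤ)
    (hγlo : ∀ i, 1 ≤ i → i ≤ k → (α 1 : ℤ) - (α (k - i + 1) : ℤ) ≤ γ i)
    (hγhi : ∀ i, 1 ≤ i → i ≤ k → γ i ≤ (α 1 : ℤ) + (β i : ℤ))
    (i : ℕ) (hi : 1 ≤ i) (hik : i ≤ k - 1) :
    γ i - γ (i + 1) < (n : ℤ) - (k : ℤ) := by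
  have hβ := hβUT i hi (by omega)
  have hα := hαUT (k - i) (by omega) (by omega)
  rw [show k - (k - i) = i by omega] at hα
  have hsum : β i + α (k - i) < n - k :=
    Nat.add_lt_of_mul_le_of_coprime ((Nat.coprime_sub_self_left hkn.le).mpr hcop)
      (by omega) hi (by omega) hβ hα
  have hup := hγhi i hi (by omega)
  have hlow := hγlo (i + 1) (by omega) (by omega)
  rw [show k - (i + 1) + 1 = k - i by omega] at hlow
  omega

/-- Let `n` and `k` be coprime with `1 < k < n`.  Let `α, β ∈ 𝒰𝒫_{n,k}`
(weakly decreasing, `α_k = β_k = 0`, `k·α_i ≤ (n−k)(k−i)` and `k·β_i ≤ (n−k)(k−i)`).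
Suppose `γ` satisfies the Littlewood–Richardson bounds
`α_1 − α_{k−i+1} ≤ γ_i ≤ α_1 + β_i` for all `1 ≤ i ≤ k`.
Then `γ_i − γ_{i+1} < n − k` for every `1 ≤ i ≤ k−1`. -/
theorem upper_triangular_weights_give_CM_bound
    (n k : ℕ) (hcop : Nat.Coprime n k) (hk : 1 < k) (hkn : k < n)
    (α β : ℕ → ℕ)
    (hαdec : ∀ i j, 1 ≤ i → i ≤ j → j ≤ k → α j ≤ α i)
    (hβdec : ∀ i j, 1 ≤ i → i ≤ j → j ≤ k → β j ≤ β i)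
    (hαk : α k = 0) (hβk : β k = 0)
    (hαUT : ∀ i, 1 ≤ i → i ≤ k → k * α i ≤ (n - k) * (k - i))
    (hβUT : ∀ i, 1 ≤ i → i ≤ k → k * β i ≤ (n - k) * (k - i))
    (γ : ℕ → ℤ)
    (hγlo : ∀ i, 1 ≤ i → i ≤ k → (α 1 : ℤ) - (α (k - i + 1) : ℤ) ≤ γ i)
    (hγhi : ∀ i, 1 ≤ i → i ≤ k → γ i ≤ (α 1 : ℤ) + (β i : ℤ))
    (i : ℕ) (hi : 1 ≤ i) (hik : i ≤ k - 1) :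
    γ i - γ (i + 1) < (n : ℤ) - (k : ℤ) :=
  upper_triangular_weights_give_CM_bound_general n k hcop hkn α β hαUT hβUT γ hγlo hγhi i hi hik
end

section
/- Let n and k be coprime integers with 1 < k < n, and set A_m = ⌊(n−k)(k−m)/k⌋ for 0 ≤ m ≤ k. Let β : {1,…,k} → ℕ be weakly decreasing with β_k = 0 and suppose β ∉ 𝒰𝒫_{n,k}; let l = max{ i ∈ {1,…,k−1} : k·β_i > (n−k)(k−i) } (which exists by assumption). Then: (a) β_l + A_{k−l} ≥ n − k; and (b) β_{l+i} ≤ A_i − A_{k−l} for every integer 1 ≤ i ≤ k − l − 1. -/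
/-!
Write `d = n - k`, so that `A m = ⌊d (k - m) / k⌋`. The floor of a linear function is additive
up to an error in `[0, 1]`: `⌊a/k⌋ + ⌊b/k⌋ ≤ ⌊(a+b)/k⌋ ≤ ⌊a/k⌋ + ⌊b/k⌋ + 1`. For (a), `β_l` exceeds
`⌊d (k - l)/k⌋`, which absorbs the `+ 1` in `d = ⌊(d (k - l) + d l)/k⌋`. For (b), maximality of `l`
gives `β_{l+i} ≤ ⌊d (k - l - i)/k⌋`, and superadditivity with `d (k - l - i) + d l = d (k - i)`
gives `β_{l+i} + A_{k-l} ≤ A_i`.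
-/

theorem Nat.add_div_le_of_div_lt {a b c x : ℕ} (h : a / c < x) : (a + b) / c ≤ x + b / c := by
  have := Nat.add_div_le_div_add_div_add_one a b c
  omega

theorem Nat.le_add_div_of_le_div {a b c x : ℕ} (h : x ≤ a / c) : x + b / c ≤ (a + b) / c :=
  (Nat.add_le_add_right h _).trans Nat.div_add_div_le_add_div

theorem maximality_of_upper_triangular_collection_general
    (n k : ℕ) (hk : 1 < k)
    (A : ℕ → ℕ) (hA : ∀ m, A m = (n - k) * (k - m) / k)
    (β : ℕ → ℕ)
    (l : ℕ) (hlk : l ≤ k - 1)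
    (hlviol : (n - k) * (k - l) < k * β l)
    (hlmax : ∀ i, l < i → i ≤ k - 1 → k * β i ≤ (n - k) * (k - i)) :
    n - k ≤ β l + A (k - l) ∧
      ∀ i, 1 ≤ i → i ≤ k - l - 1 → (β (l + i) : ℤ) ≤ (A i : ℤ) - (A (k - l) : ℤ) := by
  have hk0 : 0 < k := by omega
  have hAkl : A (k - l) = (n - k) * l / k := by rw [hA, Nat.sub_sub_self (by omega)]
  constructor
  · have hβl : (n - k) * (k - l) / k < β l := by
      rwa [Nat.div_lt_iff_lt_mul hk0, Nat.mul_comm (β l)]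
    calc n - k = ((n - k) * (k - l) + (n - k) * l) / k := by
          rw [← Nat.mul_add, Nat.sub_add_cancel (by omega), Nat.mul_div_cancel _ hk0]
      _ ≤ β l + A (k - l) := hAkl ▸ Nat.add_div_le_of_div_lt hβl
  · intro i hi hil
    have hβli : β (l + i) ≤ (n - k) * (k - (l + i)) / k := by
      rw [Nat.le_div_iff_mul_le hk0, Nat.mul_comm]
      exact hlmax (l + i) (by omega) (by omega)
    have key : β (l + i) + A (k - l) ≤ A i := by
      calc β (l + i) + A (k - l) ≤ ((n - k) * (k - (l + i)) + (n - k) * l) / k :=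
            hAkl ▸ Nat.le_add_div_of_le_div hβli
        _ = A i := by rw [hA, ← Nat.mul_add]; congr 2; omega
    omega

/-- Let `n` and `k` be coprime with `1 < k < n`, and set `A m = ⌊(n−k)(k−m)/k⌋`.
Let `β` be a weakly decreasing partition with `β_k = 0` not in `𝒰𝒫_{n,k}`, and let
`l` be the largest index `1 ≤ l ≤ k−1` with `k·β_l > (n−k)(k−l)`.  Then:
(a) `β_l + A_{k−l} ≥ n − k`; and
(b) `β_{l+i} ≤ A_i − A_{k−l}` for every `1 ≤ i ≤ k − l − 1`. -/
theorem maximality_of_upper_triangular_collection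
    (n k : ℕ) (hcop : Nat.Coprime n k) (hk : 1 < k) (hkn : k < n)
    (A : ℕ → ℕ) (hA : ∀ m, A m = (n - k) * (k - m) / k)
    (β : ℕ → ℕ)
    (hβdec : ∀ i j, 1 ≤ i → i ≤ j → j ≤ k → β j ≤ β i)
    (hβk : β k = 0)
    (l : ℕ) (hl : 1 ≤ l) (hlk : l ≤ k - 1)
    (hlviol : (n - k) * (k - l) < k * β l)
    (hlmax : ∀ i, l < i → i ≤ k - 1 → k * β i ≤ (n - k) * (k - i)) :
    n - k ≤ β l + A (k - l) ∧
      ∀ i, 1 ≤ i → i ≤ k - l - 1 → (β (l + i) : ℤ) ≤ (A i : ℤ) - (A (k - l) : ℤ) :=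
  maximality_of_upper_triangular_collection_general n k hk A hA β l hlk hlviol hlmax
end

section
/- Let n and k be coprime integers with 0 < k < n. For a k-element subset P = {p_1 < p_2 < ⋯ < p_k} of {0,1,…,n−1}, let α(P) denote the partition with α(P)_i = p_{k+1−i} − (k−i) for 1 ≤ i ≤ k. Then there is exactly one residue c ∈ ℤ/nℤ such that the rotated subset (P − c) mod n = {(p − c) mod n : p ∈ P} satisfies k·α((P − c) mod n)_i ≤ (n−k)·(k−i) for all 1 ≤ i ≤ k, i.e. such that the Young diagram of the rotated binary sequence is strictly upper triangular. -/
/-!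
Write `h(x) = n · #{p ∈ P | p < x} - k · x` for `n` times the height of the lattice path of `P`
above the diagonal after `x` steps. Reading off the rows of the Young diagram, the rotation of
`P` by `c` is strictly upper triangular iff every one of it lies weakly above the diagonal. For
`p ∈ P` the one at `(p - c) mod n` is preceded by `#{p' < p} - #{p' < c}` ones, plus `k` if the
rotation wraps `p` around; the wrap-around adds `k · n` to both sides, so the condition at that one
is `h(c) ≤ h(p)`. The first one of the rotation must sit at position `0`, forcing `c ∈ P`, so the
good rotations are the minimisers of `h` on `P`. As `n` and `k` are coprime, `h` is injective on
`{0, …, n - 1}`, and the minimiser is unique.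
-/

/-- A finite subset `Q ⊆ ℕ` (intended: a `k`-element subset of `{0,…,n−1}`) has
strictly upper triangular associated Young diagram: if `q 1 < q 2 < ⋯ < q k`
enumerates `Q`, the partition `α(Q)_i = q_{k+1−i} − (k−i)` satisfies
`k · α(Q)_i ≤ (n−k) · (k−i)` for all `1 ≤ i ≤ k`. -/
def IsUpperTriangular (n k : ℕ) (Q : Finset ℕ) : Prop :=
  ∃ q : ℕ → ℕ,
    (∀ j₁ j₂, 1 ≤ j₁ → j₁ < j₂ → j₂ ≤ k → q j₁ < q j₂) ∧
    Q = (Finset.Icc 1 k).image q ∧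
    ∀ i, 1 ≤ i → i ≤ k → k * (q (k + 1 - i) - (k - i)) ≤ (n - k) * (k - i)

open Finset

theorem Nat.mul_sub_le_sub_mul_iff {a b k n : ℕ} (hba : b ≤ a) (hkn : k ≤ n) :
    k * (a - b) ≤ (n - k) * b ↔ k * a ≤ n * b := by
  obtain ⟨d, rfl⟩ := Nat.exists_eq_add_of_le hba
  obtain ⟨m, rfl⟩ := Nat.exists_eq_add_of_le hkn
  simp only [Nat.add_sub_cancel_left, mul_add, add_mul]
  omega

theorem Finset.card_filter_lt_le (Q : Finset ℕ) (x : ℕ) : #{y ∈ Q | y < x} ≤ x :=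
  (card_le_card fun _ hy => mem_range.2 (mem_filter.1 hy).2).trans (card_range x).le

/-- Every one of the binary word with support `Q` lies weakly above the diagonal of the
`n × k` lattice path box. -/
def IsAboveDiagonal (n k : ℕ) (Q : Finset ℕ) : Prop :=
  ∀ x ∈ Q, k * x ≤ n * #{y ∈ Q | y < x}

theorem Finset.card_filter_image_lt_of_strictMonoOn {k j : ℕ} {q : ℕ → ℕ}
    (hq : StrictMonoOn q (Set.Icc 1 k)) (hj : j ∈ Icc 1 k) :
    #{x ∈ (Icc 1 k).image q | x < q j} = j - 1 := by
  have hj' := mem_Icc.1 hj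
  have hlt : {i ∈ Icc 1 k | q i < q j} = Icc 1 (j - 1) := by
    ext i
    simp only [mem_filter, mem_Icc]
    constructor
    · rintro ⟨hi, hij⟩
      have := (hq.lt_iff_lt hi hj').1 hij
      omega
    · intro hi
      exact ⟨by omega, (hq.lt_iff_lt ⟨by omega, by omega⟩ hj').2 (by omega)⟩
  rw [filter_image, card_image_of_injOn (hq.injOn.mono fun i hi => mem_Icc.1 (mem_filter.1 hi).1),
    hlt, Nat.card_Icc]
  omega

theorem Finset.exists_strictMonoOn_image_Icc_eq {Q : Finset ℕ} {k : ℕ} (hQ : #Q = k) :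
    ∃ q : ℕ → ℕ, StrictMonoOn q (Set.Icc 1 k) ∧ (Icc 1 k).image q = Q := by
  have hf : (Set.ofPred (· ∈ Q)).Finite := Q.finite_toSet
  have hcard : #hf.toFinset = k := by simpa using hQ
  refine ⟨fun j => Nat.nth (· ∈ Q) (j - 1), fun i hi j hj hij => ?_, ?_⟩
  · exact Nat.nth_lt_nth_of_lt_card hf (by grind) (by grind)
  · ext x
    simp only [mem_image, mem_Icc]
    constructor
    · rintro ⟨j, hj, rfl⟩
      exact Nat.nth_mem_of_lt_card hf (by omega)
    · intro hx
      obtain ⟨j, hj, rfl⟩ := Nat.exists_lt_card_finite_nth_eq hf hx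
      exact ⟨j + 1, by omega, rfl⟩

theorem isAboveDiagonal_image_iff {n k : ℕ} {q : ℕ → ℕ} (hkn : k ≤ n)
    (hq : StrictMonoOn q (Set.Icc 1 k)) :
    IsAboveDiagonal n k ((Icc 1 k).image q) ↔
      ∀ i, 1 ≤ i → i ≤ k → k * (q (k + 1 - i) - (k - i)) ≤ (n - k) * (k - i) := by
  have hrank : ∀ j ∈ Icc 1 k,
      k * q j ≤ n * #{y ∈ (Icc 1 k).image q | y < q j} ↔
        k * (q j - (j - 1)) ≤ (n - k) * (j - 1) := by
    intro j hj
    have hcard := card_filter_image_lt_of_strictMonoOn hq hj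
    rw [hcard, Nat.mul_sub_le_sub_mul_iff (hcard ▸ card_filter_lt_le _ _) hkn]
  simp only [IsAboveDiagonal, forall_mem_image]
  constructor
  · intro h i hi hik
    have hj : k + 1 - i ∈ Icc 1 k := mem_Icc.2 ⟨by omega, by omega⟩
    simpa [show k + 1 - i - 1 = k - i by omega] using (hrank _ hj).1 (h hj)
  · intro h j hj
    have hj' := mem_Icc.1 hj
    have := h (k + 1 - j) (by omega) (by omega)
    rw [show k + 1 - (k + 1 - j) = j by omega, show k - (k + 1 - j) = j - 1 by omega] at this
    exact (hrank j hj).2 this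

theorem isUpperTriangular_iff_isAboveDiagonal {n k : ℕ} {Q : Finset ℕ} (hkn : k ≤ n) (hQ : #Q = k) :
    IsUpperTriangular n k Q ↔ IsAboveDiagonal n k Q := by
  constructor
  · rintro ⟨q, hq, rfl, h⟩
    exact (isAboveDiagonal_image_iff hkn
      fun i hi j hj hij => hq i j hi.1 hij hj.2).2 h
  · intro h
    obtain ⟨q, hq, rfl⟩ := exists_strictMonoOn_image_Icc_eq hQ
    exact ⟨q, fun i j hi hij hj => hq ⟨hi, by omega⟩ ⟨by omega, hj⟩ hij, rfl,
      (isAboveDiagonal_image_iff hkn hq).1 h⟩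

theorem ZMod.val_natCast_sub_eq {n : ℕ} [NeZero n] {x : ℕ} (hx : x < n) (c : ZMod n) :
    ((((x : ZMod n) - c).val : ℕ) : ℤ) = x - c.val + if x < c.val then (n : ℤ) else 0 := by
  have hc := c.val_lt
  have : (x : ZMod n) - c = ((x - c.val : ℤ) : ZMod n) := by push_cast; simp
  rw [this, ZMod.val_intCast]
  split_ifs with h
  · rw [← Int.add_emod_right, Int.emod_eq_of_lt] <;> omega
  · rw [Int.emod_eq_of_lt] <;> omega

theorem ZMod.injOn_val_natCast_sub {n : ℕ} [NeZero n] (c : ZMod n) :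
    Set.InjOn (fun x : ℕ => ((x : ZMod n) - c).val) (Set.Iio n) := by
  intro x hx y hy h
  have hxy : (x : ZMod n) = y := sub_left_injective (ZMod.val_injective n h)
  rw [← ZMod.val_natCast_of_lt hx, ← ZMod.val_natCast_of_lt hy, hxy]

theorem IsAboveDiagonal.zero_mem {n k : ℕ} {Q : Finset ℕ} (h : IsAboveDiagonal n k Q)
    (hk : 0 < k) (hQ : Q.Nonempty) : 0 ∈ Q := by
  have hmin : {y ∈ Q | y < Q.min' hQ} = ∅ :=
    filter_eq_empty_iff.2 fun y hy => not_lt.2 (Q.min'_le y hy)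
  have := h _ (Q.min'_mem hQ)
  rw [hmin, card_empty, mul_zero, Nat.le_zero, mul_eq_zero] at this
  exact (this.resolve_left hk.ne') ▸ Q.min'_mem hQ

/-- `n` times the height above the diagonal of the lattice path of `P` after `x` steps. -/
def diagonalHeight (n k : ℕ) (P : Finset ℕ) (x : ℕ) : ℤ := n * #{p ∈ P | p < x} - k * x

theorem diagonalHeight_injOn {n k : ℕ} (hcop : n.Coprime k) (P : Finset ℕ) :
    Set.InjOn (diagonalHeight n k P) (Set.Iio n) := by
  intro x hx y hy h
  have hdvd : (n : ℤ) ∣ k * (x - y) :=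
    ⟨#{p ∈ P | p < x} - #{p ∈ P | p < y}, by unfold diagonalHeight at h; linarith⟩
  have hsub := Int.eq_zero_of_abs_lt_dvd
    ((Nat.isCoprime_iff_coprime.2 hcop).dvd_of_dvd_mul_left hdvd)
    (by simp only [Set.mem_Iio] at hx hy; rw [abs_lt]; omega)
  omega

section Rotation

variable {n : ℕ} [NeZero n] {P : Finset ℕ} (c : ZMod n)

theorem ite_val_natCast_sub_lt {x y : ℕ} (hx : x < n) (hy : y < n) :
    (if ((y : ZMod n) - c).val < ((x : ZMod n) - c).val then 1 else 0 : ℤ) =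
      (if y < x then 1 else 0) - (if y < c.val then 1 else 0) + if x < c.val then 1 else 0 := by
  have := ZMod.val_natCast_sub_eq hx c
  have := ZMod.val_natCast_sub_eq hy c
  split_ifs <;> omega

theorem card_filter_image_val_natCast_sub_lt (hP : ∀ p ∈ P, p < n) {x : ℕ} (hx : x ∈ P) :
    (#{y ∈ P.image (fun p : ℕ => ((p : ZMod n) - c).val) | y < ((x : ZMod n) - c).val} : ℤ) =
      #{p ∈ P | p < x} - #{p ∈ P | p < c.val} + if x < c.val then (#P : ℤ) else 0 := by
  rw [filter_image, card_image_of_injOn ((ZMod.injOn_val_natCast_sub c).mono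
    fun y hy => hP y (mem_filter.1 hy).1)]
  simp only [card_filter, Nat.cast_sum, Nat.cast_ite, Nat.cast_one, Nat.cast_zero]
  rw [sum_congr rfl fun y hy => ite_val_natCast_sub_lt c (hP x hx) (hP y hy),
    sum_add_distrib, sum_sub_distrib]
  split_ifs <;> simp

theorem mul_val_natCast_sub_le_iff {k : ℕ} (hP : ∀ p ∈ P, p < n) (hPk : #P = k) {x : ℕ}
    (hx : x ∈ P) :
    k * ((x : ZMod n) - c).val ≤
        n * #{y ∈ P.image (fun p : ℕ => ((p : ZMod n) - c).val) | y < ((x : ZMod n) - c).val} ↔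
      diagonalHeight n k P c.val ≤ diagonalHeight n k P x := by
  rw [← Nat.cast_le (α := ℤ), Nat.cast_mul, Nat.cast_mul,
    card_filter_image_val_natCast_sub_lt c hP hx, ZMod.val_natCast_sub_eq (hP x hx), hPk]
  unfold diagonalHeight
  split_ifs <;> constructor <;> intro h <;> linarith

theorem isUpperTriangular_image_val_natCast_sub_iff {k : ℕ} (hk : 0 < k) (hkn : k ≤ n)
    (hP : ∀ p ∈ P, p < n) (hPk : #P = k) :
    IsUpperTriangular n k (P.image fun p : ℕ => ((p : ZMod n) - c).val) ↔
      c.val ∈ P ∧ ∀ p ∈ P, diagonalHeight n k P c.val ≤ diagonalHeight n k P p := by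
  have hcard : #(P.image fun p : ℕ => ((p : ZMod n) - c).val) = k := by
    rw [card_image_of_injOn ((ZMod.injOn_val_natCast_sub c).mono hP), hPk]
  rw [isUpperTriangular_iff_isAboveDiagonal hkn hcard]
  constructor
  · intro h
    obtain ⟨p, hp, hp0⟩ := mem_image.1 (h.zero_mem hk (card_pos.1 (hcard ▸ hk)))
    rw [ZMod.val_eq_zero, sub_eq_zero] at hp0
    have hcp : c.val = p := by rw [← hp0, ZMod.val_natCast_of_lt (hP p hp)]
    exact ⟨hcp ▸ hp, fun x hx =>
      (mul_val_natCast_sub_le_iff c hP hPk hx).1 (h _ (mem_image_of_mem _ hx))⟩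
  · rintro ⟨-, hmin⟩
    simp only [IsAboveDiagonal, forall_mem_image]
    exact fun x hx => (mul_val_natCast_sub_le_iff c hP hPk hx).2 (hmin x hx)

end Rotation

/-- Let `n` and `k` be coprime with `0 < k < n`.  For any `k`-element subset `P`
of `{0,…,n−1}` there is exactly one residue `c ∈ ℤ/nℤ` such that the rotated
subset `(P − c) mod n` has strictly upper triangular Young diagram. -/
theorem unique_upper_triangular_rotation
    (n k : ℕ) (hcop : Nat.Coprime n k) (hk : 0 < k) (hkn : k < n)
    (P : Finset ℕ) (hPcard : P.card = k) (hPsub : ∀ p ∈ P, p < n) :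
    ∃! c : ZMod n,
      IsUpperTriangular n k (P.image fun p : ℕ => ((p : ZMod n) - c).val) := by
  have : NeZero n := ⟨by omega⟩
  obtain ⟨c₀, hc₀P, hc₀min⟩ :=
    P.exists_min_image (diagonalHeight n k P) (card_pos.1 (hPcard ▸ hk))
  have hc₀ : (c₀ : ZMod n).val = c₀ := ZMod.val_natCast_of_lt (hPsub c₀ hc₀P)
  refine ⟨c₀, (isUpperTriangular_image_val_natCast_sub_iff _ hk hkn.le hPsub hPcard).2 ?_,
    fun c hc => ?_⟩
  · rw [hc₀]
    exact ⟨hc₀P, hc₀min⟩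
  · obtain ⟨hcP, hcmin⟩ :=
      (isUpperTriangular_image_val_natCast_sub_iff c hk hkn.le hPsub hPcard).1 hc
    have hcc₀ : c.val = c₀ := diagonalHeight_injOn hcop P c.val_lt (hPsub c₀ hc₀P)
      (le_antisymm (hcmin c₀ hc₀P) (hc₀min _ hcP))
    rw [← ZMod.natCast_zmod_val c, hcc₀]
end

section
/- Let n and k be integers with 1 < k < n. Let α be a partition with at most k parts, α_k = 0 and α_1 > n − k. Let i be an integer with 1 ≤ i ≤ n such that the k integers α_1 + (k−1), α_2 + (k−2), …, α_{k−1} + 1, i are pairwise distinct; list them in strictly decreasing order as δ_1 > δ_2 > ⋯ > δ_k, set β_j = δ_j − (k−j), and define β̃ by β̃_j = β_j − β_k. Then β̃_1 < α_1. -/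
/-!
Every one of the `k` integers lies in `[1, α₁ + k - 1]`: the shifted entries because `α` is
weakly decreasing, and `i` because `i ≤ n < α₁ + k`. As `δ₁` and `δ_k` are among them,
`β̃₁ = δ₁ - (k - 1) - δ_k ≤ α₁ - 1`.
-/

open Finset

theorem shifted_entry_mem_Icc {k : ℕ} {α : ℕ → ℕ}
    (hα : ∀ i j, 1 ≤ i → i ≤ j → j ≤ k → α j ≤ α i) {j : ℕ} (hj1 : 1 ≤ j) (hjk : j < k) :
    α j + (k - j) ∈ Icc 1 (α 1 + (k - 1)) := by
  have := hα 1 j le_rfl hj1 hjk.le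
  rw [mem_Icc]
  omega

theorem image_subset_Icc_of_shifted_entries {k : ℕ} {α f : ℕ → ℕ}
    (hα : ∀ i j, 1 ≤ i → i ≤ j → j ≤ k → α j ≤ α i)
    (hf : ∀ j, 1 ≤ j → j ≤ k - 1 → f j = α j + (k - j))
    (hfk : f k ∈ Icc 1 (α 1 + (k - 1))) :
    (Icc 1 k).image f ⊆ Icc 1 (α 1 + (k - 1)) := by
  refine image_subset_iff.2 fun j hj => ?_
  obtain ⟨hj1, hjk⟩ := mem_Icc.1 hj
  rcases hjk.lt_or_eq with hjk | rfl
  · exact hf j hj1 (by omega) ▸ shifted_entry_mem_Icc hα hj1 hjk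
  · exact hfk

theorem staircase_term_decreases_first_entry_general
    (n k : ℕ) (hk : 1 < k)
    (α : ℕ → ℕ)
    (hαdec : ∀ i j, 1 ≤ i → i ≤ j → j ≤ k → α j ≤ α i)
    (hα1 : n - k < α 1)
    (i : ℕ) (hi1 : 1 ≤ i) (hin : i ≤ n)
    (f : ℕ → ℕ)
    (hf : ∀ j, 1 ≤ j → j ≤ k - 1 → f j = α j + (k - j)) (hfk : f k = i)
    (δ : ℕ → ℕ)
    (hδim : (Finset.Icc 1 k).image δ = (Finset.Icc 1 k).image f)
    (βt : ℕ → ℕ)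
    (hβt : ∀ j, 1 ≤ j → j ≤ k → (βt j : ℤ) = (δ j : ℤ) - ((k : ℤ) - j) - (δ k : ℤ)) :
    βt 1 < α 1 := by
  have hk1 : 1 ≤ k := hk.le
  have hδ : (Icc 1 k).image δ ⊆ Icc 1 (α 1 + (k - 1)) :=
    hδim ▸ image_subset_Icc_of_shifted_entries hαdec hf (hfk ▸ mem_Icc.2 ⟨hi1, by omega⟩)
  have hδ1 := mem_Icc.1 (hδ (mem_image_of_mem δ (mem_Icc.2 ⟨le_rfl, hk1⟩)))
  have hδk := mem_Icc.1 (hδ (mem_image_of_mem δ (mem_Icc.2 ⟨hk1, le_rfl⟩)))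
  have hβt1 := hβt 1 le_rfl hk1
  omega

/-- Let `1 < k < n`.  Let `α` be a partition with at most `k` parts, `α_k = 0` and
`α_1 > n − k`.  Let `1 ≤ i ≤ n` be such that the `k` integers
`α_1+(k−1), α_2+(k−2), …, α_{k−1}+1, i` are pairwise distinct; list them strictly
decreasingly as `δ_1 > ⋯ > δ_k`, set `β_j = δ_j − (k−j)` and `β̃_j = β_j − β_k`.
Then `β̃_1 < α_1`. -/
theorem staircase_term_decreases_first_entry
    (n k : ℕ) (hk : 1 < k) (hkn : k < n)
    (α : ℕ → ℕ)
    (hαdec : ∀ i j, 1 ≤ i → i ≤ j → j ≤ k → α j ≤ α i)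
    (hαk : α k = 0) (hα1 : n - k < α 1)
    (i : ℕ) (hi1 : 1 ≤ i) (hin : i ≤ n)
    (f : ℕ → ℕ)
    (hf : ∀ j, 1 ≤ j → j ≤ k - 1 → f j = α j + (k - j)) (hfk : f k = i)
    (hdist : Set.InjOn f (Set.Icc 1 k))
    (δ : ℕ → ℕ)
    (hδdec : ∀ j₁ j₂, 1 ≤ j₁ → j₁ < j₂ → j₂ ≤ k → δ j₂ < δ j₁)
    (hδim : (Finset.Icc 1 k).image δ = (Finset.Icc 1 k).image f)
    (βt : ℕ → ℕ)
    (hβt : ∀ j, 1 ≤ j → j ≤ k → (βt j : ℤ) = (δ j : ℤ) - ((k : ℤ) - j) - (δ k : ℤ)) :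
    βt 1 < α 1 :=
  staircase_term_decreases_first_entry_general n k hk α hαdec hα1 i hi1 hin f hf hfk δ hδim βt hβt
end

section
/- Let n and k be coprime integers with 1 < k < n. Define a relation on partitions with at most k parts and last part 0 by declaring α ⊳ β̃ whenever α is not strictly upper triangular (α ∉ 𝒰𝒫_{n,k}) and β̃ is the normalized Borel–Weil–Bott term of α at some integer 1 ≤ i ≤ n (i.e. the k integers α_1 + (k−1), α_2 + (k−2), …, α_{k−1} + 1, i are pairwise distinct, δ is their strictly decreasing rearrangement, β_j = δ_j − (k−j), and β̃_j = β_j − β_k). Then there is no infinite sequence α⁰ ⊳ α¹ ⊳ α² ⊳ ⋯ ; equivalently, iterating the staircase resolution starting from any partition with at most k parts and last part 0 terminates, after finitely many steps, in partitions belonging to 𝒰𝒫_{n,k}. -/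
/-- `α` is a partition with at most `k` parts and last part `0`
(viewed as a weakly decreasing function on `{1,…,k}`). -/
def IsPartitionK (k : ℕ) (α : ℕ → ℕ) : Prop :=
  (∀ i j, 1 ≤ i → i ≤ j → j ≤ k → α j ≤ α i) ∧ α k = 0

/-- `α` is strictly upper triangular, i.e. `α ∈ 𝒰𝒫_{n,k}`:
`k·α_i ≤ (n−k)·(k−i)` for every `1 ≤ i ≤ k`. -/
def IsStrictlyUpperTriangular (n k : ℕ) (α : ℕ → ℕ) : Prop :=
  ∀ i, 1 ≤ i → i ≤ k → k * α i ≤ (n - k) * (k - i)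

/-- `βt` is the normalized Borel–Weil–Bott term of `α` at `i`: the `k` integers
`α_1+(k−1), …, α_{k−1}+1, i` are pairwise distinct, `δ` is their strictly
decreasing rearrangement, `β_j = δ_j − (k−j)`, and `β̃_j = β_j − β_k`. -/
def IsBWBTerm (k : ℕ) (α : ℕ → ℕ) (i : ℕ) (βt : ℕ → ℕ) : Prop :=
  ∃ f δ : ℕ → ℕ,
    (∀ j, 1 ≤ j → j ≤ k - 1 → f j = α j + (k - j)) ∧ f k = i ∧
    Set.InjOn f (Set.Icc 1 k) ∧
    (∀ j₁ j₂, 1 ≤ j₁ → j₁ < j₂ → j₂ ≤ k → δ j₂ < δ j₁) ∧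
    (Finset.Icc 1 k).image δ = (Finset.Icc 1 k).image f ∧
    ∀ j, 1 ≤ j → j ≤ k → (βt j : ℤ) = (δ j : ℤ) - ((k : ℤ) - j) - (δ k : ℤ)

/-- The staircase relation: `α ⊳ β̃` iff `α, β̃` are partitions with at most `k`
parts and last part `0`, `α ∉ 𝒰𝒫_{n,k}`, and `β̃` is the normalized
Borel–Weil–Bott term of `α` at some `1 ≤ i ≤ n`. -/
def StaircaseRel (n k : ℕ) (α βt : ℕ → ℕ) : Prop :=
  IsPartitionK k α ∧ IsPartitionK k βt ∧
    ¬ IsStrictlyUpperTriangular n k α ∧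
    ∃ i, 1 ≤ i ∧ i ≤ n ∧ IsBWBTerm k α i βt

/-!
Encode `α` by its β-numbers `α_j + (k - j)`, a `k`-element set `S ∋ 0`. For `t < n` let
`W_S(t) = k t - n #{x ∈ S | x < t}`; as `gcd(n, k) = 1` this is injective, so it has a unique
maximiser, the peak of `S`. If `α ∉ 𝒰𝒫_{n,k}` and `S ⊆ [0, n)`, then `W_S` is positive at some
β-number, hence the peak `u` is a positive β-number. A Borel–Weil–Bott step replaces the
β-number `0` by `i` and subtracts the new minimum `m ≥ 1`; comparing weights at `u - m` and at
`m + u'` shows that the new peak `u'` is smaller than `u`. While the largest β-number is `≥ n`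
it drops at every step instead, so the measure "`n` + largest β-number if that is `≥ n`, the
peak otherwise" strictly decreases along any chain.
-/

namespace Staircase

open Finset

def weight (n : ℕ) (S : Finset ℕ) (t : ℕ) : ℤ := #S * t - n * #{x ∈ S | x < t}

section Weight

variable {n : ℕ} {S : Finset ℕ}

lemma weight_zero : weight n S 0 = 0 := by simp [weight]

lemma weight_of_forall_lt {t : ℕ} (h : ∀ x ∈ S, x < t) :
    weight n S t = #S * ((t : ℤ) - n) := by
  rw [weight, filter_true_of_mem h]; ring

lemma weight_nonpos_of_forall_lt {t : ℕ} (h : ∀ x ∈ S, x < t) (ht : t ≤ n) :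
    weight n S t ≤ 0 := by
  rw [weight_of_forall_lt h]
  exact mul_nonpos_of_nonneg_of_nonpos (by positivity) (by omega)

lemma weight_injOn (hcop : n.Coprime #S) : Set.InjOn (weight n S) (Set.Iio n) := by
  intro t ht t' ht' h
  simp only [Set.mem_Iio] at ht ht'
  have hdvd : (n : ℤ) ∣ #S * ((t : ℤ) - t') :=
    ⟨#{x ∈ S | x < t} - #{x ∈ S | x < t'}, by unfold weight at h; linear_combination h⟩
  have := Int.eq_zero_of_abs_lt_dvd
    ((Nat.isCoprime_iff_coprime.mpr hcop).dvd_of_dvd_mul_left hdvd) (by rw [abs_lt]; omega)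
  omega

lemma card_filter_lt_insert {T : Finset ℕ} {a : ℕ} (ha : a ∉ T) (t : ℕ) :
    #{x ∈ insert a T | x < t} = #{x ∈ T | x < t} + if a < t then 1 else 0 := by
  rw [filter_insert]
  split_ifs
  · exact card_insert_of_notMem fun h => ha (mem_of_mem_filter a h)
  · rfl

lemma weight_insert_sub_weight_insert {T : Finset ℕ} {a b : ℕ} (ha : a ∉ T) (hb : b ∉ T)
    (t : ℕ) : weight n (insert a T) t - weight n (insert b T) t
      = n * ((if b < t then 1 else 0) - if a < t then 1 else 0) := by
  simp only [weight, card_filter_lt_insert ha, card_filter_lt_insert hb,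
    card_insert_of_notMem ha, card_insert_of_notMem hb]
  push_cast
  ring

lemma injOn_sub_of_le {F : Finset ℕ} {m : ℕ} (hm : ∀ x ∈ F, m ≤ x) :
    Set.InjOn (· - m) (F : Set ℕ) :=
  fun a ha b hb h => (tsub_left_inj (hm a ha) (hm b hb)).mp h

lemma card_image_sub {F : Finset ℕ} {m : ℕ} (hm : ∀ x ∈ F, m ≤ x) :
    #(F.image (· - m)) = #F :=
  card_image_of_injOn (injOn_sub_of_le hm)

lemma weight_image_sub {F : Finset ℕ} {m : ℕ} (hm : ∀ x ∈ F, m ≤ x) (y : ℕ) :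
    weight n (F.image (· - m)) y = weight n F (m + y) - #F * m := by
  have hfilter : #{x ∈ F | x - m < y} = #{x ∈ F | x < m + y} := by
    congr 1; refine filter_congr fun x hx => ?_; have := hm x hx; omega
  rw [weight, weight, filter_image, card_image_sub hm,
    card_image_of_injOn ((injOn_sub_of_le hm).mono (filter_subset _ _)), hfilter]
  push_cast
  ring

noncomputable def peak (n : ℕ) (S : Finset ℕ) : ℕ :=
  if hn : 0 < n then
    ((range n).exists_max_image (weight n S) (nonempty_range_iff.mpr hn.ne')).choose
  else 0

lemma peak_spec (hn : 0 < n) :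
    peak n S < n ∧ ∀ t < n, weight n S t ≤ weight n S (peak n S) := by
  rw [peak, dif_pos hn]
  obtain ⟨hmem, hmax⟩ :=
    ((range n).exists_max_image (weight n S) (nonempty_range_iff.mpr hn.ne')).choose_spec
  exact ⟨mem_range.mp hmem, fun t ht => hmax t (mem_range.mpr ht)⟩

lemma peak_lt (hn : 0 < n) : peak n S < n := (peak_spec hn).1

lemma weight_le_weight_peak (hn : 0 < n) {t : ℕ} (ht : t < n) :
    weight n S t ≤ weight n S (peak n S) := (peak_spec hn).2 t ht

lemma weight_lt_weight_peak (hn : 0 < n) (hcop : n.Coprime #S) {t : ℕ} (ht : t < n)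
    (hne : t ≠ peak n S) : weight n S t < weight n S (peak n S) :=
  (weight_le_weight_peak hn ht).lt_of_ne fun h => hne (weight_injOn hcop ht (peak_lt hn) h)

lemma peak_mem (hn : 0 < n) (hS : ∀ x ∈ S, x < n) (hpos : 0 < weight n S (peak n S)) :
    peak n S ∈ S := by
  set u := peak n S
  by_contra hu
  have hS0 : (0 : ℤ) < #S := by
    rcases S.eq_empty_or_nonempty with rfl | hne
    · simp [weight] at hpos
    · exact_mod_cast hne.card_pos
  -- no β-number sits at `u`, so one step to the right only gains
  have hstep : weight n S (u + 1) = weight n S u + #S := by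
    have : #{x ∈ S | x < u + 1} = #{x ∈ S | x < u} := by
      congr 1; refine filter_congr fun x hx => ?_
      have : x ≠ u := fun h => hu (h ▸ hx); omega
    simp only [weight, this]; push_cast; ring
  rcases Nat.lt_or_ge (u + 1) n with hlt | hge
  · linarith [weight_le_weight_peak (S := S) hn hlt]
  · have hun : ((u + 1 : ℕ) : ℤ) = n := by have := peak_lt (S := S) hn; omega
    rw [weight_of_forall_lt (by intro x hx; have := hS x hx; omega), hun] at hstep
    linarith

lemma peak_mem_of_exists_weight_pos (hn : 0 < n) (hS : ∀ x ∈ S, x < n)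
    (hpos : ∃ t ∈ S, 0 < weight n S t) : peak n S ∈ S ∧ peak n S ≠ 0 := by
  obtain ⟨t, ht, htpos⟩ := hpos
  have hWu := htpos.trans_le (weight_le_weight_peak hn (hS t ht))
  exact ⟨peak_mem hn hS hWu, fun h => hWu.ne' (by rw [h, weight_zero])⟩

lemma peak_le_of_forall_le (hn : 0 < n) (hcop : n.Coprime #S) {b : ℕ} (hS : ∀ x ∈ S, x ≤ b)
    (h0 : peak n S ≠ 0) : peak n S ≤ b := by
  by_contra! h
  have hW := weight_lt_weight_peak hn hcop hn h0.symm
  rw [weight_zero] at hW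
  exact hW.not_ge (weight_nonpos_of_forall_lt (fun x hx => (hS x hx).trans_lt h) (peak_lt hn).le)

theorem peak_image_sub_lt {T : Finset ℕ} {i m : ℕ} (hcop : n.Coprime (#T + 1))
    (hT : ∀ x ∈ T, 0 < x ∧ x < n) (hi : 0 < i) (hin : i ≤ n) (hiT : i ∉ T)
    (hm : IsLeast (↑(insert i T) : Set ℕ) m)
    (hpos : ∃ t ∈ insert 0 T, 0 < weight n (insert 0 T) t) :
    peak n ((insert i T).image (· - m)) < peak n (insert 0 T) := by
  have h0T : 0 ∉ T := fun h => (hT 0 h).1.false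
  have hn : 0 < n := by omega
  have hS : ∀ x ∈ insert 0 T, x < n := by
    intro x hx
    rcases mem_insert.mp hx with rfl | hx
    exacts [hn, (hT x hx).2]
  have hF : ∀ x ∈ insert i T, 0 < x ∧ x ≤ n := by
    intro x hx
    rcases mem_insert.mp hx with rfl | hx
    exacts [⟨hi, hin⟩, ⟨(hT x hx).1, (hT x hx).2.le⟩]
  have hcopS : n.Coprime #(insert 0 T) := by rwa [card_insert_of_notMem h0T]
  have hcopS' : n.Coprime #((insert i T).image (· - m)) := by
    rwa [card_image_sub hm.2, card_insert_of_notMem hiT]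
  have hm0 : 0 < m := (hF m hm.1).1
  set u := peak n (insert 0 T)
  set u' := peak n ((insert i T).image (· - m))
  have hu : u < n := peak_lt hn
  have hu' : u' < n := peak_lt hn
  obtain ⟨huS, hu0⟩ : u ∈ insert 0 T ∧ u ≠ 0 := peak_mem_of_exists_weight_pos hn hS hpos
  have hmu : m ≤ u := hm.2 (mem_insert_of_mem ((mem_insert.mp huS).resolve_left hu0))
  by_contra! huu'
  have hu'm : u' ≤ n - m := by
    refine peak_le_of_forall_le hn hcopS' (fun x hx => ?_) (by omega)
    obtain ⟨y, hy, rfl⟩ := mem_image.mp hx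
    have := hF y hy
    omega
  have ineq₁ : weight n (insert i T) u < weight n (insert i T) (m + u') := by
    have := weight_lt_weight_peak hn hcopS' (t := u - m) (by omega) (by omega)
    rwa [weight_image_sub hm.2, weight_image_sub hm.2, Nat.add_sub_cancel' hmu,
      sub_lt_sub_iff_right] at this
  have ineq₂ : weight n (insert 0 T) (m + u') < weight n (insert 0 T) u := by
    rcases (show m + u' ≤ n by omega).lt_or_eq with h | h
    · exact weight_lt_weight_peak hn hcopS h (by omega)
    · rw [h, weight_of_forall_lt hS, sub_self, mul_zero]
      simpa only [weight_zero] using weight_lt_weight_peak hn hcopS hn hu0.symm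
  -- `insert 0 T` and `insert i T` differ only in `0` versus `i`, so by `ineq₁` and `ineq₂` the
  -- difference `n ([i < t] - 1)` of their weights is smaller at `t = m + u'` than at `t = u`
  have hdiff := weight_insert_sub_weight_insert (n := n) h0T hiT u
  have hdiff' := weight_insert_sub_weight_insert (n := n) h0T hiT (m + u')
  split_ifs at hdiff hdiff' <;> omega

end Weight

def betaNumbers (k : ℕ) (α : ℕ → ℕ) : Finset ℕ := (Icc 1 k).image fun j => α j + (k - j)

def upperBetaNumbers (k : ℕ) (α : ℕ → ℕ) : Finset ℕ :=
  (Icc 1 (k - 1)).image fun j => α j + (k - j)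

lemma image_Icc_one_eq_insert {k : ℕ} (hk : 0 < k) (g : ℕ → ℕ) :
    (Icc 1 k).image g = insert (g k) ((Icc 1 (k - 1)).image g) := by
  rw [← image_insert]; congr 1; ext j; simp only [mem_insert, mem_Icc]; omega

lemma betaNumbers_eq_insert {k : ℕ} (hk : 0 < k) (α : ℕ → ℕ) :
    betaNumbers k α = insert (α k) (upperBetaNumbers k α) := by
  rw [betaNumbers, image_Icc_one_eq_insert hk, Nat.sub_self, add_zero, upperBetaNumbers]

lemma card_filter_lt_image_of_strictAntiOn {k : ℕ} {g : ℕ → ℕ}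
    (hg : StrictAntiOn g (Set.Icc 1 k)) {j : ℕ} (hj : j ∈ Set.Icc 1 k) :
    #{x ∈ (Icc 1 k).image g | x < g j} = k - j := by
  have hfilter : {a ∈ Icc 1 k | g a < g j} = Ioc j k := by
    ext a
    simp only [mem_filter, mem_Icc, mem_Ioc]
    constructor
    · rintro ⟨ha, hlt⟩
      exact ⟨(hg.lt_iff_gt ha hj).mp hlt, ha.2⟩
    · rintro ⟨hja, hak⟩
      have ha : a ∈ Set.Icc 1 k := ⟨by simp at hj; omega, hak⟩
      exact ⟨ha, (hg.lt_iff_gt ha hj).mpr hja⟩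
  rw [filter_image, card_image_of_injOn (hg.injOn.mono fun a ha => by simp at ha; exact ha.1),
    hfilter, Nat.card_Ioc]

end Staircase

open Staircase Finset

namespace IsPartitionK

variable {k : ℕ} {α : ℕ → ℕ}

lemma strictAntiOn (hα : IsPartitionK k α) :
    StrictAntiOn (fun j => α j + (k - j)) (Set.Icc 1 k) := by
  intro a ha b hb hab
  have := hα.1 a b ha.1 hab.le hb.2
  simp only [Set.mem_Icc] at ha hb ⊢
  omega

lemma card_betaNumbers (hα : IsPartitionK k α) : #(betaNumbers k α) = k := by
  rw [betaNumbers, card_image_of_injOn (hα.strictAntiOn.injOn.mono (by simp)), Nat.card_Icc,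
    Nat.add_sub_cancel]

lemma card_upperBetaNumbers (hα : IsPartitionK k α) : #(upperBetaNumbers k α) = k - 1 := by
  rw [upperBetaNumbers, card_image_of_injOn (hα.strictAntiOn.injOn.mono ?_), Nat.card_Icc,
    Nat.add_sub_cancel]
  intro j hj
  simp only [coe_Icc, Set.mem_Icc] at hj ⊢
  omega

lemma mem_upperBetaNumbers (hα : IsPartitionK k α) {x : ℕ} (hx : x ∈ upperBetaNumbers k α) :
    0 < x ∧ x ≤ α 1 + (k - 1) := by
  obtain ⟨j, hj, rfl⟩ := mem_image.mp hx
  simp only [mem_Icc] at hj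
  have := hα.1 1 j le_rfl hj.1 (by omega)
  omega

lemma exists_weight_pos {n : ℕ} (hkn : k ≤ n) (hα : IsPartitionK k α)
    (h : ¬ IsStrictlyUpperTriangular n k α) :
    ∃ t ∈ betaNumbers k α, 0 < weight n (betaNumbers k α) t := by
  simp only [IsStrictlyUpperTriangular, not_forall, not_le] at h
  obtain ⟨j, hj1, hjk, hlt⟩ := h
  refine ⟨α j + (k - j), mem_image_of_mem _ (mem_Icc.mpr ⟨hj1, hjk⟩), ?_⟩
  rw [weight, hα.card_betaNumbers, betaNumbers,
    card_filter_lt_image_of_strictAntiOn hα.strictAntiOn ⟨hj1, hjk⟩]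
  -- the weight at the `j`-th β-number is `k α_j - (n - k)(k - j)`
  zify [hkn, hjk] at hlt ⊢
  linarith

end IsPartitionK

namespace IsBWBTerm

variable {k i : ℕ} {α βt : ℕ → ℕ}

lemma not_mem_upperBetaNumbers (h : IsBWBTerm k α i βt) : i ∉ upperBetaNumbers k α := by
  obtain ⟨f, δ, hf, hfk, hinj, -⟩ := h
  intro hi
  obtain ⟨j, hj, hij⟩ := mem_image.mp hi
  simp only [mem_Icc] at hj
  have : j = k := hinj (Set.mem_Icc.mpr ⟨hj.1, by omega⟩) (Set.mem_Icc.mpr ⟨by omega, le_rfl⟩)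
    (by rw [hf j hj.1 hj.2, hfk, hij])
  omega

lemma exists_betaNumbers_eq_image_sub (hk : 0 < k) (h : IsBWBTerm k α i βt) :
    ∃ m, IsLeast (↑(insert i (upperBetaNumbers k α)) : Set ℕ) m ∧
      betaNumbers k βt = (insert i (upperBetaNumbers k α)).image (· - m) := by
  obtain ⟨f, δ, hf, hfk, -, hδ, himage, hβ⟩ := h
  have hF : (Icc 1 k).image f = insert i (upperBetaNumbers k α) := by
    rw [image_Icc_one_eq_insert hk, hfk, upperBetaNumbers]
    congr 1
    exact image_congr fun j hj => hf j (mem_Icc.mp hj).1 (mem_Icc.mp hj).2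
  have hδk : ∀ j ∈ Icc 1 k, δ k ≤ δ j := by
    intro j hj
    rcases (mem_Icc.mp hj).2.lt_or_eq with hlt | rfl
    · exact (hδ j k (mem_Icc.mp hj).1 hlt le_rfl).le
    · rfl
  rw [← hF, ← himage]
  refine ⟨δ k, ⟨mem_image_of_mem δ (mem_Icc.mpr ⟨hk, le_rfl⟩), ?_⟩, ?_⟩
  · rintro x hx
    obtain ⟨j, hj, rfl⟩ := mem_image.mp hx
    exact hδk j hj
  · rw [image_image, betaNumbers]
    refine image_congr fun j hj => ?_
    have hδj := hδk j hj
    obtain ⟨hj1, hjk⟩ := mem_Icc.mp hj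
    have := hβ j hj1 hjk
    simp only [Function.comp_apply]
    omega

end IsBWBTerm

namespace StaircaseRel

variable {n k : ℕ} {α β : ℕ → ℕ}

lemma top_lt (hk : 0 < k) (h : StaircaseRel n k α β) :
    β 1 + (k - 1) < max (α 1 + (k - 1)) n := by
  obtain ⟨hα, -, -, i, hi, hin, hbwb⟩ := h
  obtain ⟨m, hm, hβ⟩ := hbwb.exists_betaNumbers_eq_image_sub hk
  have hbound : ∀ x ∈ insert i (upperBetaNumbers k α), 0 < x ∧ x ≤ max (α 1 + (k - 1)) n := by
    intro x hx
    rcases mem_insert.mp hx with rfl | hx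
    · exact ⟨hi, le_max_of_le_right hin⟩
    · exact ⟨(hα.mem_upperBetaNumbers hx).1, le_max_of_le_left (hα.mem_upperBetaNumbers hx).2⟩
  have htop : β 1 + (k - 1) ∈ betaNumbers k β := mem_image_of_mem _ (mem_Icc.mpr ⟨le_rfl, hk⟩)
  rw [hβ] at htop
  obtain ⟨x, hx, hxm⟩ := mem_image.mp htop
  have := hbound x hx
  have := hbound m hm.1
  omega

lemma peak_betaNumbers_lt (hcop : n.Coprime k) (hk : 0 < k) (hkn : k < n)
    (h : StaircaseRel n k α β) (htop : α 1 + (k - 1) < n) :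
    peak n (betaNumbers k β) < peak n (betaNumbers k α) := by
  obtain ⟨hα, -, hα', i, hi, hin, hbwb⟩ := h
  obtain ⟨m, hm, hβ⟩ := hbwb.exists_betaNumbers_eq_image_sub hk
  have hαβ : betaNumbers k α = insert 0 (upperBetaNumbers k α) := by
    rw [betaNumbers_eq_insert hk, hα.2]
  rw [hβ, hαβ]
  refine peak_image_sub_lt (by rwa [hα.card_upperBetaNumbers, Nat.sub_add_cancel hk])
    (fun x hx => ?_) hi hin hbwb.not_mem_upperBetaNumbers hm
    (hαβ ▸ hα.exists_weight_pos hkn.le hα')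
  have := hα.mem_upperBetaNumbers hx
  omega

end StaircaseRel

noncomputable def staircaseMeasure (n k : ℕ) (α : ℕ → ℕ) : ℕ :=
  if α 1 + (k - 1) < n then peak n (betaNumbers k α) else n + (α 1 + (k - 1))

lemma StaircaseRel.staircaseMeasure_lt {n k : ℕ} {α β : ℕ → ℕ} (hcop : n.Coprime k)
    (hk : 0 < k) (hkn : k < n) (h : StaircaseRel n k α β) :
    staircaseMeasure n k β < staircaseMeasure n k α := by
  have htop := h.top_lt hk
  unfold staircaseMeasure
  split_ifs with hβ hα hα
  · exact h.peak_betaNumbers_lt hcop hk hkn hα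
  · have := Staircase.peak_lt (S := betaNumbers k β) (by omega : 0 < n)
    omega
  · omega
  · omega

/-- For `n, k` coprime with `1 < k < n` there is no infinite chain
`α⁰ ⊳ α¹ ⊳ α² ⊳ ⋯` for the staircase relation: iterating the staircase
resolution terminates after finitely many steps in partitions of `𝒰𝒫_{n,k}`. -/
theorem staircase_relation_terminates
    (n k : ℕ) (hcop : Nat.Coprime n k) (hk : 1 < k) (hkn : k < n) :
    ¬ ∃ A : ℕ → ℕ → ℕ, ∀ m, StaircaseRel n k (A m) (A (m + 1)) := by
  rintro ⟨A, hA⟩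
  exact not_strictAnti_of_wellFoundedLT (fun m => staircaseMeasure n k (A m))
    (strictAnti_nat_of_succ_lt fun m => (hA m).staircaseMeasure_lt hcop (by omega) hkn)
end
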